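/- Let (G, ·, ∘) be a skew brace. Then the category of modules over (G, ·, ∘) — triples (M, ▷, ▶) where (M, ▷) is a G_·-action, (M, ▶) is a G_∘-action, and g ▶ (h ▷ m) = ((g ∘ h) · g⁻¹) ▷ (g ▶ m) for all g, h ∈ G, m ∈ M — is isomorphic to the category of modules (G-sets with action) over the semidirect product group G_· ⋉ G_∘. -/

import Mathlib

open CategoryTheory

universe u

/-- A skew brace: a set `G` with two group structures `(G, ·)` (given by the `Group G`
instance) and `(G, ∘)` (given by `circ`, `oneo`, `invo`) such that
`a ∘ (b · c) = (a ∘ b) · a⁻¹ · (a ∘ c)`. -/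
structure SkewBrace (G : Type u) [Group G] where
  circ : G → G → G
  oneo : G
  invo : G → G
  circ_assoc : ∀ a b c, circ (circ a b) c = circ a (circ b c)
  oneo_circ : ∀ a, circ oneo a = a
  circ_oneo : ∀ a, circ a oneo = a
  invo_circ : ∀ a, circ (invo a) a = oneo
  compat : ∀ a b c, circ a (b * c) = circ a b * a⁻¹ * circ a c

variable {G : Type u} [Group G] (B : SkewBrace G)

/-- A module over the skew brace `(G, ·, ∘)`: a set `M` with an action `▷` of `(G, ·)`,
an action `▶` of `(G, ∘)` and the compatibility
`g ▶ (h ▷ m) = ((g ∘ h) · g⁻¹) ▷ (g ▶ m)`. -/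
structure SkewBraceMod where
  M : Type u
  dact : G → M → M
  tact : G → M → M
  dact_one : ∀ m, dact 1 m = m
  dact_mul : ∀ g h m, dact (g * h) m = dact g (dact h m)
  tact_one : ∀ m, tact B.oneo m = m
  tact_mul : ∀ g h m, tact (B.circ g h) m = tact g (tact h m)
  compat : ∀ g h m, tact g (dact h m) = dact (B.circ g h * g⁻¹) (tact g m)

instance : Category (SkewBraceMod B) where
  Hom X Y := {f : X.M → Y.M //
    (∀ g m, f (X.dact g m) = Y.dact g (f m)) ∧ (∀ g m, f (X.tact g m) = Y.tact g (f m))}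
  id X := ⟨id, fun _ _ => rfl, fun _ _ => rfl⟩
  comp {X Y Z} f g := ⟨g.1 ∘ f.1, fun a m => by simp [f.2.1, g.2.1],
    fun a m => by simp [f.2.2, g.2.2]⟩
  id_comp f := Subtype.ext rfl
  comp_id f := Subtype.ext rfl
  assoc f g h := Subtype.ext rfl

/-- A module (`G`-set) over the semidirect product group `G_· ⋉ G_∘`, whose underlying set
is `G × G` with multiplication `(a, g)(b, h) = (a · (g⁻¹ · (g ∘ b)), g ∘ h)` and unit
`(1, 1_∘)`. -/
structure SemidirectMod where
  M : Type u
  act : G × G → M → M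
  act_one : ∀ m, act (1, B.oneo) m = m
  act_mul : ∀ a g b h m,
    act (a * (g⁻¹ * B.circ g b), B.circ g h) m = act (a, g) (act (b, h) m)

instance : Category (SemidirectMod B) where
  Hom X Y := {f : X.M → Y.M // ∀ p m, f (X.act p m) = Y.act p (f m)}
  id X := ⟨id, fun _ _ => rfl⟩
  comp {X Y Z} f g := ⟨g.1 ∘ f.1, fun p m => by simp [f.2, g.2]⟩
  id_comp f := Subtype.ext rfl
  comp_id f := Subtype.ext rfl
  assoc f g h := Subtype.ext rfl


/-!
The semidirect product `G_· ⋉ G_∘` contains `G_·` as `a ↦ (a, 1)` and `G_∘` as `g ↦ (g, g)`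
(the two units agree: `a ∘ 1 = a` follows from `compat` with `b = c = 1`). Every element
factors as `(a, g) = (a · g⁻¹, 1)(g, g)`, and the skew brace compatibility of a module is exactly
the commutation relation `(g, g)(h, 1) = ((g ∘ h) · g⁻¹, 1)(g, g)`. Hence an action of the
semidirect product amounts to a pair of compatible actions of `G_·` and `G_∘`, and the two
translations are mutually inverse on the nose.
-/

namespace SkewBrace

variable {G : Type u} [Group G] (B : SkewBrace G)

theorem circ_one (a : G) : B.circ a 1 = a := by
  have h : B.circ a 1 = B.circ a 1 * a⁻¹ * B.circ a 1 := by simpa using B.compat a 1 1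
  exact mul_inv_eq_one.mp (by simpa using h)

theorem oneo_eq_one : B.oneo = 1 := by
  simpa [B.oneo_circ] using (B.circ_one B.oneo).symm

theorem one_circ (a : G) : B.circ 1 a = a := by
  simpa [B.oneo_eq_one] using B.oneo_circ a

theorem circ_mul_inv_circ (g b h : G) :
    B.circ g b * (B.circ g h)⁻¹ = B.circ g (b * h⁻¹) * g⁻¹ := by
  rw [← inv_mul_cancel_right b h, B.compat g (b * h⁻¹) h, inv_mul_cancel_right]
  group

end SkewBrace

variable {B}

namespace SkewBraceMod

theorem tact_one' (X : SkewBraceMod B) (m : X.M) : X.tact 1 m = m := by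
  simpa [B.oneo_eq_one] using X.tact_one m

def toSemidirectMod (X : SkewBraceMod B) : SemidirectMod B where
  M := X.M
  act p m := X.dact (p.1 * p.2⁻¹) (X.tact p.2 m)
  act_one m := by simp [B.oneo_eq_one, X.tact_one', X.dact_one]
  act_mul a g b h m := by
    rw [X.compat g (b * h⁻¹), ← X.dact_mul, ← X.tact_mul, ← B.circ_mul_inv_circ]
    group

theorem hom_heq {X X' Y Y' : SkewBraceMod B} (hX : X = X') (hY : Y = Y') {f : X ⟶ Y}
    {f' : X' ⟶ Y'} (h : HEq f.1 f'.1) : HEq f f' := by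
  subst hX hY
  exact heq_of_eq (Subtype.ext (eq_of_heq h))

theorem functor_eq_id (F : SkewBraceMod B ⥤ SkewBraceMod B) (hobj : ∀ X, F.obj X = X)
    (hmap : ∀ X Y (f : X ⟶ Y), HEq (F.map f).1 f.1) : F = 𝟭 (SkewBraceMod B) :=
  Functor.hext hobj fun X Y f => hom_heq (hobj X) (hobj Y) (hmap X Y f)

end SkewBraceMod

namespace SemidirectMod

variable (Y : SemidirectMod B)

theorem act_fst_mul (a b : G) (m : Y.M) : Y.act (a * b, 1) m = Y.act (a, 1) (Y.act (b, 1) m) := by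
  simpa [B.one_circ] using Y.act_mul a 1 b 1 m

theorem act_diag_circ (g h : G) (m : Y.M) :
    Y.act (B.circ g h, B.circ g h) m = Y.act (g, g) (Y.act (h, h) m) := by
  simpa using Y.act_mul g g h h m

theorem act_eq_act_fst_act_diag (a g : G) (m : Y.M) :
    Y.act (a, g) m = Y.act (a * g⁻¹, 1) (Y.act (g, g) m) := by
  simpa [B.one_circ] using Y.act_mul (a * g⁻¹) 1 g g m

theorem act_diag_act_fst (g h : G) (m : Y.M) :
    Y.act (g, g) (Y.act (h, 1) m) = Y.act (B.circ g h * g⁻¹, 1) (Y.act (g, g) m) := by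
  rw [← Y.act_mul, ← act_eq_act_fst_act_diag, B.circ_one, mul_inv_cancel_left]

def toSkewBraceMod : SkewBraceMod B where
  M := Y.M
  dact a m := Y.act (a, 1) m
  tact g m := Y.act (g, g) m
  dact_one m := by simpa [B.oneo_eq_one] using Y.act_one m
  dact_mul := Y.act_fst_mul
  tact_one m := by simpa [B.oneo_eq_one] using Y.act_one m
  tact_mul := Y.act_diag_circ
  compat := Y.act_diag_act_fst

theorem hom_heq {X X' Y Y' : SemidirectMod B} (hX : X = X') (hY : Y = Y') {f : X ⟶ Y}
    {f' : X' ⟶ Y'} (h : HEq f.1 f'.1) : HEq f f' := by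
  subst hX hY
  exact heq_of_eq (Subtype.ext (eq_of_heq h))

theorem functor_eq_id (F : SemidirectMod B ⥤ SemidirectMod B) (hobj : ∀ X, F.obj X = X)
    (hmap : ∀ X Y (f : X ⟶ Y), HEq (F.map f).1 f.1) : F = 𝟭 (SemidirectMod B) :=
  Functor.hext hobj fun X Y f => hom_heq (hobj X) (hobj Y) (hmap X Y f)

theorem toSkewBraceMod_toSemidirectMod : Y.toSkewBraceMod.toSemidirectMod = Y := by
  obtain ⟨M, act, act_one, act_mul⟩ := Y
  unfold toSkewBraceMod SkewBraceMod.toSemidirectMod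
  congr
  funext p m
  exact (act_eq_act_fst_act_diag ⟨M, act, act_one, act_mul⟩ p.1 p.2 m).symm

end SemidirectMod

theorem SkewBraceMod.toSemidirectMod_toSkewBraceMod (X : SkewBraceMod B) :
    X.toSemidirectMod.toSkewBraceMod = X := by
  obtain ⟨M, dact, tact, dact_one, dact_mul, tact_one, tact_mul, compat⟩ := X
  unfold toSemidirectMod SemidirectMod.toSkewBraceMod
  congr
  · funext a m
    simpa [B.oneo_eq_one] using congrArg (dact a) (tact_one m)
  · funext g m
    simpa using dact_one (tact g m)

def SkewBraceMod.toSemidirectModFunctor : SkewBraceMod B ⥤ SemidirectMod B where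
  obj := toSemidirectMod
  map f := ⟨f.1, fun p m => (f.2.1 _ _).trans (congrArg _ (f.2.2 _ _))⟩

def SemidirectMod.toSkewBraceModFunctor : SemidirectMod B ⥤ SkewBraceMod B where
  obj := toSkewBraceMod
  map f := ⟨f.1, fun a m => f.2 (a, 1) m, fun g m => f.2 (g, g) m⟩

/-- The category of modules over a skew brace `(G, ·, ∘)` is isomorphic to the category of
modules over the semidirect product group `G_· ⋉ G_∘`. -/
theorem skewBraceMod_iso_semidirectMod :
    ∃ (F : SkewBraceMod B ⥤ SemidirectMod B) (Gf : SemidirectMod B ⥤ SkewBraceMod B),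
      F ⋙ Gf = 𝟭 (SkewBraceMod B) ∧ Gf ⋙ F = 𝟭 (SemidirectMod B) := by
  exact ⟨SkewBraceMod.toSemidirectModFunctor, SemidirectMod.toSkewBraceModFunctor,
    SkewBraceMod.functor_eq_id _ SkewBraceMod.toSemidirectMod_toSkewBraceMod fun _ _ _ => HEq.rfl,
    SemidirectMod.functor_eq_id _ SemidirectMod.toSkewBraceMod_toSemidirectMod fun _ _ _ => HEq.rfl⟩
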